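/- arXiv:1607.04242 — 2 statements merged into one kernel-verified Lean document; each statement's English description precedes it below -/
import Mathlib

section
/- Evolution of the characteristic function under the quantum diffusion semigroup (the paper's Theorem 2, item 2, in weak form): for every integer n ≥ 1, every t > 0, every z ∈ ℝ^{2n}, and all φ, ψ ∈ L²(ℝⁿ), one has ∫_{ℝ^{2n}} g_{t/2}(w) ⟨φ, V(−w) V(z) V(w) ψ⟩ dw = e^{−t|z|²/4} ⟨φ, V(z) ψ⟩. -/
open MeasureTheory ComplexConjugate

/-- The Weyl (displacement) operator `V(q,p)` on `L²(ℝⁿ)`, acting on functions: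
`(V(q,p)ψ)(x) = exp(-i q·p/2) exp(-i p·x) ψ(x+q)`. -/
noncomputable def weylOp {n : ℕ} (q p : EuclideanSpace ℝ (Fin n))
    (ψ : EuclideanSpace ℝ (Fin n) → ℂ) : EuclideanSpace ℝ (Fin n) → ℂ :=
  fun x => Complex.exp (-Complex.I * ((inner ℝ q p : ℝ) : ℂ) / 2) *
    Complex.exp (-Complex.I * ((inner ℝ p x : ℝ) : ℂ)) * ψ (x + q)

/-!
The Weyl relations give `V(-w) V(z) V(w) = e^{i σ(w, z)} V(z)` pointwise, with `σ` the standard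
symplectic form, so the inner integral is a phase times `⟨φ, V(z) ψ⟩`. Averaging the phase against
the Gaussian is a Fourier transform of a Gaussian; it factorises over the two components of `w`,
each contributing `e^{-t |z_i|² / 4}`.
-/

open Complex RealInnerProductSpace Module

section Gaussian

variable {V : Type*} [NormedAddCommGroup V] [InnerProductSpace ℝ V] [FiniteDimensional ℝ V]
  [MeasurableSpace V] [BorelSpace V]

def symplecticForm (w z : V × V) : ℝ := ⟪w.1, z.2⟫ - ⟪w.2, z.1⟫

theorem integral_exp_neg_sq_norm_div_mul_cexp_inner {t : ℝ} (ht : 0 < t) (y : V) :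
    ∫ v : V, (Real.exp (-‖v‖ ^ 2 / t) : ℂ) * cexp (I * ⟪y, v⟫) =
      ((Real.pi * t) ^ (finrank ℝ V / 2 : ℝ) * Real.exp (-(t * ‖y‖ ^ 2) / 4) : ℝ) := by
  have hb : 0 < (1 / (t : ℂ)).re := by
    rw [← ofReal_one, ← ofReal_div, ofReal_re]; positivity
  have htne : (t : ℂ) ≠ 0 := by exact_mod_cast ht.ne'
  convert GaussianFourier.integral_cexp_neg_mul_sq_norm_add hb I y using 1
  · congr 1 with v
    rw [ofReal_exp, ← Complex.exp_add]
    congr 1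
    push_cast
    ring
  · rw [ofReal_mul, ofReal_cpow (by positivity), ofReal_exp]
    push_cast
    congr 2
    · field_simp
    · rw [I_sq]; field_simp

theorem integral_gaussian_mul_cexp_symplecticForm {t : ℝ} (ht : 0 < t) (z : V × V) :
    ∫ w : V × V, (((Real.pi * t) ^ (-(finrank ℝ V : ℝ)) *
        Real.exp (-(‖w.1‖ ^ 2 + ‖w.2‖ ^ 2) / t) : ℝ) : ℂ) * cexp (I * symplecticForm w z) =
      (Real.exp (-(t * (‖z.1‖ ^ 2 + ‖z.2‖ ^ 2)) / 4) : ℝ) := by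
  have hfactor : ∀ w : V × V, (((Real.pi * t) ^ (-(finrank ℝ V : ℝ)) *
      Real.exp (-(‖w.1‖ ^ 2 + ‖w.2‖ ^ 2) / t) : ℝ) : ℂ) * cexp (I * symplecticForm w z) =
      (((Real.pi * t) ^ (-(finrank ℝ V : ℝ)) : ℝ) : ℂ) *
        (((Real.exp (-‖w.1‖ ^ 2 / t) : ℂ) * cexp (I * ⟪z.2, w.1⟫)) *
          ((Real.exp (-‖w.2‖ ^ 2 / t) : ℂ) * cexp (I * ⟪-z.1, w.2⟫))) := by
    intro w
    rw [neg_add, add_div, Real.exp_add, inner_neg_left, real_inner_comm w.1, real_inner_comm w.2]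
    simp only [symplecticForm, ofReal_mul, ofReal_sub, ofReal_neg, mul_sub, mul_neg,
      Complex.exp_sub, Complex.exp_neg]
    ring
  have hπt : 0 < Real.pi * t := by positivity
  simp_rw [hfactor]
  rw [Measure.volume_eq_prod, integral_const_mul,
    integral_prod_mul (fun v : V => (Real.exp (-‖v‖ ^ 2 / t) : ℂ) * cexp (I * ⟪z.2, v⟫))
      (fun v : V => (Real.exp (-‖v‖ ^ 2 / t) : ℂ) * cexp (I * ⟪-z.1, v⟫)),
    integral_exp_neg_sq_norm_div_mul_cexp_inner ht, integral_exp_neg_sq_norm_div_mul_cexp_inner ht,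
    norm_neg]
  rw [← ofReal_mul, ← ofReal_mul, ofReal_inj, mul_mul_mul_comm, ← Real.rpow_add hπt, add_halves,
    ← mul_assoc, ← Real.rpow_add hπt, neg_add_cancel, Real.rpow_zero, one_mul, ← Real.exp_add]
  ring_nf

end Gaussian

theorem weylOp_conj {n : ℕ} (w z : EuclideanSpace ℝ (Fin n) × EuclideanSpace ℝ (Fin n))
    (ψ : EuclideanSpace ℝ (Fin n) → ℂ) (x : EuclideanSpace ℝ (Fin n)) :
    weylOp (-w.1) (-w.2) (weylOp z.1 z.2 (weylOp w.1 w.2 ψ)) x =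
      cexp (I * symplecticForm w z) * weylOp z.1 z.2 ψ x := by
  have hshift : x + -w.1 + z.1 + w.1 = x + z.1 := by abel
  simp only [weylOp, symplecticForm, hshift, inner_neg_left, inner_add_right,
    inner_neg_right, real_inner_comm z.2 w.1, real_inner_comm w.2 w.1]
  simp only [← mul_assoc, ← Complex.exp_add]
  congr 2
  push_cast
  ring

theorem characteristic_function_evolution_general (n : ℕ) (t : ℝ) (ht : 0 < t)
    (z : EuclideanSpace ℝ (Fin n) × EuclideanSpace ℝ (Fin n))
    (φ ψ : EuclideanSpace ℝ (Fin n) → ℂ) :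
    (∫ w : EuclideanSpace ℝ (Fin n) × EuclideanSpace ℝ (Fin n),
        ((((Real.pi * t) ^ (-(n : ℝ)) * Real.exp (-(‖w.1‖ ^ 2 + ‖w.2‖ ^ 2) / t) : ℝ)) : ℂ) *
          ∫ x, conj (φ x) *
            weylOp (-w.1) (-w.2) (weylOp z.1 z.2 (weylOp w.1 w.2 ψ)) x)
      = ((Real.exp (-(t * (‖z.1‖ ^ 2 + ‖z.2‖ ^ 2)) / 4) : ℝ) : ℂ) *
          ∫ x, conj (φ x) * weylOp z.1 z.2 ψ x := by
  simp_rw [weylOp_conj, mul_left_comm (conj (φ _)), integral_const_mul, ← mul_assoc]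
  rw [integral_mul_const, ← integral_gaussian_mul_cexp_symplecticForm ht z,
    finrank_euclideanSpace_fin]

/-- Evolution of the characteristic function under the quantum diffusion semigroup, in weak
form: for `t > 0`, `z ∈ ℝ^{2n}` and `φ, ψ ∈ L²(ℝⁿ)`,
`∫ g_{t/2}(w) ⟨φ, V(-w)V(z)V(w)ψ⟩ dw = e^{-t|z|²/4} ⟨φ, V(z)ψ⟩`. -/
theorem characteristic_function_evolution (n : ℕ) (hn : 1 ≤ n) (t : ℝ) (ht : 0 < t)
    (z : EuclideanSpace ℝ (Fin n) × EuclideanSpace ℝ (Fin n))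
    (φ ψ : EuclideanSpace ℝ (Fin n) → ℂ)
    (hφ : MemLp φ 2 (volume : Measure (EuclideanSpace ℝ (Fin n))))
    (hψ : MemLp ψ 2 (volume : Measure (EuclideanSpace ℝ (Fin n)))) :
    (∫ w : EuclideanSpace ℝ (Fin n) × EuclideanSpace ℝ (Fin n),
        ((((Real.pi * t) ^ (-(n : ℝ)) * Real.exp (-(‖w.1‖ ^ 2 + ‖w.2‖ ^ 2) / t) : ℝ)) : ℂ) *
          ∫ x, conj (φ x) *
            weylOp (-w.1) (-w.2) (weylOp z.1 z.2 (weylOp w.1 w.2 ψ)) x)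
      = ((Real.exp (-(t * (‖z.1‖ ^ 2 + ‖z.2‖ ^ 2)) / 4) : ℝ) : ℂ) *
          ∫ x, conj (φ x) * weylOp z.1 z.2 ψ x :=
  characteristic_function_evolution_general n t ht z φ ψ
end

section
/- Isoperimetric and log-Sobolev inequalities from concavity and linear growth (the analytic skeleton of the paper's Theorems 5 and 6): let n ≥ 1 be an integer and let S : [0,∞) → ℝ be differentiable with S'(t) = J(t)/4 for all t ≥ 0, where J : [0,∞) → (0,∞) is differentiable and satisfies J'(t) + J(t)²/(4n) ≤ 0 for all t ≥ 0. Assume moreover that there exists M ≥ 0 such that |exp(S(t)/n) − e·t/2| ≤ M for all t ≥ 0, where e is Euler's number. Then J(0) · exp(S(0)/n) ≥ 2en, and consequently n − S(0) ≤ J(0)/(2e). -/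
open Set Filter Topology Real

/-!
Writing `N = exp (S / n)`, the de Bruijn identity gives `N' = J N / (4n)` and the Riccati
inequality gives `N'' = N (J' + J² / (4n)) / (4n) ≤ 0`, so `N` is concave on `[0, ∞)` and lies
below its tangent line at `0`. Since `N t` grows like `e t / 2`, that tangent has slope at least
`e / 2`, which is `J(0) N(0) ≥ 2en`. The log-Sobolev form follows from
`1 - S(0)/n ≤ exp (-S(0)/n)`.
-/

lemma ConcaveOn.le_of_hasDerivWithinAt_of_mul_sub_le {f : ℝ → ℝ} {f' c M : ℝ}
    (hf : ConcaveOn ℝ (Ici 0) f) (hf' : HasDerivWithinAt f f' (Ici 0) 0)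
    (hlow : ∀ t ∈ Ici (0 : ℝ), c * t - M ≤ f t) : c ≤ f' := by
  have hlim : Tendsto (fun t => c - (f 0 + M) / t) atTop (𝓝 c) := by
    simpa using tendsto_const_nhds.sub ((tendsto_const_nhds (x := f 0 + M)).div_atTop tendsto_id)
  refine le_of_tendsto hlim ?_
  filter_upwards [eventually_gt_atTop 0] with t ht
  have hslope : slope f 0 t ≤ f' := hf.slope_le_of_hasDerivWithinAt self_mem_Ici ht.le ht hf'
  rw [slope_def_field, sub_zero, div_le_iff₀ ht] at hslope
  rw [sub_le_comm, le_div_iff₀ ht]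
  linarith [hlow t ht.le]

lemma concaveOn_exp_div_of_riccati {n : ℝ} (hn : 0 ≤ n) {S J J' : ℝ → ℝ} {s : Set ℝ}
    (hs : Convex ℝ s) (hS : ∀ t ∈ s, HasDerivWithinAt S (J t / 4) s t)
    (hJ : ∀ t ∈ s, HasDerivWithinAt J (J' t) s t)
    (hRic : ∀ t ∈ s, J' t + J t ^ 2 / (4 * n) ≤ 0) :
    ConcaveOn ℝ s (fun t => exp (S t / n)) := by
  have hN : ∀ t ∈ s, HasDerivWithinAt (fun t => exp (S t / n))
      (exp (S t / n) * (J t / 4 / n)) s t := fun t ht => ((hS t ht).div_const n).exp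
  refine concaveOn_of_hasDerivWithinAt2_nonpos hs (fun t ht => (hN t ht).continuousWithinAt)
    (fun t ht => (hN t (interior_subset ht)).mono interior_subset)
    (fun t ht => ((hN t (interior_subset ht)).mul
      (((hJ t (interior_subset ht)).div_const 4).div_const n)).mono interior_subset)
    (fun t ht => ?_)
  have hsecond : exp (S t / n) * (J t / 4 / n) * (J t / 4 / n) + exp (S t / n) * (J' t / 4 / n)
      = exp (S t / n) / (4 * n) * (J' t + J t ^ 2 / (4 * n)) := by ring
  rw [hsecond]
  exact mul_nonpos_of_nonneg_of_nonpos (by positivity) (hRic t (interior_subset ht))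

lemma sub_le_div_of_mul_le_mul_exp_div {n s j : ℝ} (hn : 0 < n)
    (h : 2 * exp 1 * n ≤ j * exp (s / n)) : n - s ≤ j / (2 * exp 1) := by
  have hexp : n - s ≤ n * exp (-(s / n)) := by
    have := mul_le_mul_of_nonneg_left (add_one_le_exp (-(s / n))) hn.le
    rwa [mul_add, mul_neg, mul_div_cancel₀ _ hn.ne', mul_one, neg_add_eq_sub] at this
  have hj : n * exp (-(s / n)) * (2 * exp 1) ≤ j := by
    calc n * exp (-(s / n)) * (2 * exp 1) = 2 * exp 1 * n * exp (-(s / n)) := by ring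
      _ ≤ j * exp (s / n) * exp (-(s / n)) := by gcongr
      _ = j := by rw [mul_assoc, ← exp_add, add_neg_cancel, exp_zero, mul_one]
  exact hexp.trans ((le_div_iff₀ (by positivity)).mpr hj)

theorem isoperimetric_and_log_sobolev_general (n : ℕ) (hn : 1 ≤ n)
    (S J J' : ℝ → ℝ)
    (hS : ∀ t ∈ Ici (0 : ℝ), HasDerivWithinAt S (J t / 4) (Ici 0) t)
    (hJ : ∀ t ∈ Ici (0 : ℝ), HasDerivWithinAt J (J' t) (Ici 0) t)
    (hRic : ∀ t ∈ Ici (0 : ℝ), J' t + J t ^ 2 / (4 * n) ≤ 0)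
    (M : ℝ)
    (hlin : ∀ t ∈ Ici (0 : ℝ),
      |Real.exp (S t / n) - Real.exp 1 * t / 2| ≤ M) :
    2 * Real.exp 1 * n ≤ J 0 * Real.exp (S 0 / n) ∧
      (n : ℝ) - S 0 ≤ J 0 / (2 * Real.exp 1) := by
  have hn' : (0 : ℝ) < n := by exact_mod_cast hn
  have hconcave := concaveOn_exp_div_of_riccati hn'.le (convex_Ici 0) hS hJ hRic
  have hslope : exp 1 / 2 ≤ exp (S 0 / n) * (J 0 / 4 / n) :=
    hconcave.le_of_hasDerivWithinAt_of_mul_sub_le (M := M) ((hS 0 self_mem_Ici).div_const _).exp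
      fun t ht => by linarith [(abs_le.mp (hlin t ht)).1]
  have hiso : 2 * exp 1 * n ≤ J 0 * exp (S 0 / n) :=
    calc 2 * exp 1 * n = 4 * n * (exp 1 / 2) := by ring
      _ ≤ 4 * n * (exp (S 0 / n) * (J 0 / 4 / n)) := by gcongr
      _ = J 0 * exp (S 0 / n) := by field_simp
  exact ⟨hiso, sub_le_div_of_mul_le_mul_exp_div hn' hiso⟩

/-- Isoperimetric and log-Sobolev inequalities from concavity and linear growth:
if `S' = J/4` on `[0,∞)` with `J > 0` differentiable satisfying `J' + J²/(4n) ≤ 0`,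
and `|exp(S(t)/n) - e·t/2| ≤ M` for all `t ≥ 0`, then `J(0)·exp(S(0)/n) ≥ 2en` and
consequently `n - S(0) ≤ J(0)/(2e)`. -/
theorem isoperimetric_and_log_sobolev (n : ℕ) (hn : 1 ≤ n)
    (S J J' : ℝ → ℝ)
    (hS : ∀ t ∈ Ici (0 : ℝ), HasDerivWithinAt S (J t / 4) (Ici 0) t)
    (hJpos : ∀ t ∈ Ici (0 : ℝ), 0 < J t)
    (hJ : ∀ t ∈ Ici (0 : ℝ), HasDerivWithinAt J (J' t) (Ici 0) t)
    (hRic : ∀ t ∈ Ici (0 : ℝ), J' t + J t ^ 2 / (4 * n) ≤ 0)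
    (M : ℝ) (hM : 0 ≤ M)
    (hlin : ∀ t ∈ Ici (0 : ℝ),
      |Real.exp (S t / n) - Real.exp 1 * t / 2| ≤ M) :
    2 * Real.exp 1 * n ≤ J 0 * Real.exp (S 0 / n) ∧
      (n : ℝ) - S 0 ≤ J 0 / (2 * Real.exp 1) :=
  isoperimetric_and_log_sobolev_general n hn S J J' hS hJ hRic M hlin
end
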